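/- arXiv:1101.5395 — 5 statements merged into one kernel-verified Lean document; each statement's English description precedes it below -/
import Mathlib

section
/- For nonnegative integers p, q and an integer z with 0 < z < p+q, there is a bijection from the disjoint union over k (with max(0, z-q) ≤ k ≤ min(p, z)) of the products Sh(k, z-k) × Sh(p-k, q+k-z) of sets of shuffles, onto the set Sh(p, q) of (p,q)-shuffles. Here a (a,b)-shuffle is a permutation γ of {0,1,...,a+b-1} such that γ is increasing on {0,...,a-1} and increasing on {a,...,a+b-1}. The bijection sends (α, β) ∈ Sh(k, z-k) × Sh(p-k, q+k-z) to the permutation γ defined by γ(c) = α(c) for c ∈ [0, k-1], γ(c) = β(c-k) + z for c ∈ [k, p-1], γ(c) = α(c-p+k) for c ∈ [p, p+z-k-1], and γ(c) = β(c-z) + z for c ∈ [p+z-k, p+q-1]. -/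
/-- A permutation `γ` of `Fin n` is an `(a, n-a)`-shuffle if it is strictly increasing
on `{0, ..., a-1}` and on `{a, ..., n-1}`. -/
def IsShuffle (a : ℕ) {n : ℕ} (γ : Equiv.Perm (Fin n)) : Prop :=
  (∀ c d : Fin n, (c : ℕ) < d → (d : ℕ) < a → γ c < γ d) ∧
  (∀ c d : Fin n, a ≤ (c : ℕ) → (c : ℕ) < (d : ℕ) → γ c < γ d)

/-- The value of a permutation of `Fin n` on a natural number (junk value `i` for `i ≥ n`). -/
def permNat {n : ℕ} (γ : Equiv.Perm (Fin n)) (i : ℕ) : ℕ :=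
  if h : i < n then (γ ⟨i, h⟩ : ℕ) else i

/-!
A `(p, q)`-shuffle `γ` is increasing on both blocks, so the positions at which it takes values
below `z` are an initial segment `[0, k)` of the first block together with an initial segment
`[p, p + j)` of the second, and `k + j = z` because `γ` is a bijection. Reading `γ` off these
positions gives the `(k, z - k)`-shuffle `α`; reading it off the remaining positions and
subtracting `z` gives the `(p - k, q + k - z)`-shuffle `β`. The interleaving formula is the
inverse of this reading.
-/

open Set

section PermNat

variable {n : ℕ}

theorem mapsTo_permNat (γ : Equiv.Perm (Fin n)) : MapsTo (permNat γ) (Iio n) (Iio n) :=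
  fun i hi => by simp only [permNat, dif_pos (show i < n from hi), mem_Iio, Fin.is_lt]

theorem injOn_permNat (γ : Equiv.Perm (Fin n)) : InjOn (permNat γ) (Iio n) := by
  intro i hi j hj h
  simp only [permNat, dif_pos (show i < n from hi), dif_pos (show j < n from hj)] at h
  simpa using γ.injective (Fin.ext h)

theorem surjOn_permNat (γ : Equiv.Perm (Fin n)) : SurjOn (permNat γ) (Iio n) (Iio n) := by
  intro v hv
  refine ⟨γ.symm ⟨v, hv⟩, (γ.symm ⟨v, hv⟩).is_lt, ?_⟩
  simp [permNat]

theorem permNat_coe (γ : Equiv.Perm (Fin n)) (c : Fin n) : permNat γ c = γ c := by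
  simp [permNat]

theorem eq_of_eqOn_permNat {γ γ' : Equiv.Perm (Fin n)}
    (h : EqOn (permNat γ) (permNat γ') (Iio n)) : γ = γ' :=
  Equiv.ext fun c => Fin.ext <| by simpa only [permNat_coe] using h c.is_lt

noncomputable def permOfInjOn (f : ℕ → ℕ) (hf : MapsTo f (Iio n) (Iio n))
    (hinj : InjOn f (Iio n)) : Equiv.Perm (Fin n) :=
  Equiv.ofBijective (fun c => ⟨f c, hf c.is_lt⟩) <| Finite.injective_iff_bijective.mp
    fun c d h => Fin.ext <| hinj c.is_lt d.is_lt (congrArg Fin.val h)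

theorem permNat_permOfInjOn {f : ℕ → ℕ} (hf : MapsTo f (Iio n) (Iio n))
    (hinj : InjOn f (Iio n)) {i : ℕ} (hi : i < n) : permNat (permOfInjOn f hf hinj) i = f i := by
  simp [permNat, hi, permOfInjOn]

theorem exists_permNat_eqOn {f : ℕ → ℕ} (hf : MapsTo f (Iio n) (Iio n))
    (hinj : InjOn f (Iio n)) : ∃ σ : Equiv.Perm (Fin n), ∀ i < n, permNat σ i = f i :=
  ⟨permOfInjOn f hf hinj, fun _ => permNat_permOfInjOn hf hinj⟩

theorem card_filter_permNat_lt (γ : Equiv.Perm (Fin n)) {z : ℕ} (hz : z ≤ n) :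
    ((Finset.range n).filter (permNat γ · < z)).card = z := by
  rw [← Finset.card_range z]
  refine Finset.card_nbij (permNat γ) (fun c hc => by simp_all) ?_ fun v hv => ?_
  · exact (injOn_permNat γ).mono fun c hc => by simp_all
  · rw [Finset.coe_range, mem_Iio] at hv
    obtain ⟨c, hc, rfl⟩ := surjOn_permNat γ (show v < n by omega)
    exact ⟨c, by simp_all, rfl⟩

end PermNat

theorem isShuffle_iff_strictMonoOn {a n : ℕ} {γ : Equiv.Perm (Fin n)} (ha : a ≤ n) :
    IsShuffle a γ ↔
      StrictMonoOn (permNat γ) (Iio a) ∧ StrictMonoOn (permNat γ) (Ico a n) := by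
  constructor
  · rintro ⟨h₁, h₂⟩
    refine ⟨fun c hc d hd hcd => ?_, fun c hc d hd hcd => ?_⟩
    · have hd' : d < n := lt_of_lt_of_le hd ha
      simpa [permNat, hd', hcd.trans hd'] using h₁ ⟨c, hcd.trans hd'⟩ ⟨d, hd'⟩ hcd hd
    · have hc' := hcd.trans hd.2
      simpa [permNat, hd.2, hc'] using h₂ ⟨c, hc'⟩ ⟨d, hd.2⟩ hc.1 hcd
  · rintro ⟨h₁, h₂⟩
    refine ⟨fun c d hcd hd => ?_, fun c d hc hcd => ?_⟩
    · simpa [permNat_coe] using h₁ (show (c : ℕ) < a by omega) hd hcd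
    · simpa [permNat_coe] using h₂ ⟨hc, c.is_lt⟩ ⟨hc.trans hcd.le, d.is_lt⟩ hcd

theorem IsShuffle.of_comp {p n a m t : ℕ} {γ : Equiv.Perm (Fin n)} {α : Equiv.Perm (Fin m)}
    (hγ : IsShuffle p γ) (hp : p ≤ n) (ha : a ≤ m) {π : ℕ → ℕ} (hπ : StrictMono π)
    (h₁ : MapsTo π (Iio a) (Iio p)) (h₂ : MapsTo π (Ico a m) (Ico p n))
    (h : ∀ i < m, permNat α i + t = permNat γ (π i)) : IsShuffle a α := by
  obtain ⟨hγ₁, hγ₂⟩ := (isShuffle_iff_strictMonoOn hp).mp hγ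
  refine (isShuffle_iff_strictMonoOn ha).mpr ⟨fun c hc d hd hcd => ?_, fun c hc d hd hcd => ?_⟩
  · have := hγ₁ (h₁ hc) (h₁ hd) (hπ hcd)
    simp only [mem_Iio] at hc hd
    rw [← h c (by omega), ← h d (by omega)] at this
    omega
  · have := hγ₂ (h₂ hc) (h₂ hd) (hπ hcd)
    rw [← h c hc.2, ← h d hd.2] at this
    omega

theorem MonotoneOn.exists_lt_iff_lt {f : ℕ → ℕ} {a b : ℕ} (hf : MonotoneOn f (Ico a b))
    (hab : a ≤ b) (z : ℕ) :
    ∃ m, a ≤ m ∧ m ≤ b ∧ ∀ c ∈ Ico a b, f c < z ↔ c < m := by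
  classical
  have hex : ∃ m, a ≤ m ∧ (m = b ∨ z ≤ f m) := ⟨b, hab, .inl rfl⟩
  obtain ⟨ham, hm⟩ := Nat.find_spec hex
  refine ⟨Nat.find hex, ham, Nat.find_min' hex ⟨hab, .inl rfl⟩,
    fun c hc => ⟨fun hfc => ?_, fun hcm => ?_⟩⟩
  · by_contra! hmc
    rcases hm with hm | hm
    · exact absurd hc.2 (by omega)
    · exact hfc.not_ge (hm.trans (hf ⟨ham, hmc.trans_lt hc.2⟩ hc hmc))
  · have := Nat.find_min hex hcm
    simp only [hc.1, true_and, not_or, not_le] at this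
    exact this.2

theorem IsShuffle.exists_split {p q z : ℕ} {γ : Equiv.Perm (Fin (p + q))} (hγ : IsShuffle p γ)
    (hz : z ≤ p + q) : ∃ k, k ≤ p ∧ k ≤ z ∧ z ≤ k + q ∧
      ∀ c < p + q, (permNat γ c < z ↔ c < k ∨ p ≤ c ∧ c < p + z - k) := by
  obtain ⟨h₁, h₂⟩ := (isShuffle_iff_strictMonoOn (Nat.le_add_right p q)).mp hγ
  obtain ⟨k, -, hkp, hk⟩ :=
    (h₁.monotoneOn.mono Ico_subset_Iio_self).exists_lt_iff_lt (Nat.zero_le p) z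
  obtain ⟨m, hpm, hm, hm'⟩ := h₂.monotoneOn.exists_lt_iff_lt (Nat.le_add_right p q) z
  have hchar : ∀ c < p + q, permNat γ c < z ↔ c < k ∨ p ≤ c ∧ c < m := by
    intro c hc
    rcases lt_or_ge c p with hcp | hcp
    · rw [hk c ⟨c.zero_le, hcp⟩]; omega
    · rw [hm' c ⟨hcp, hc⟩]; omega
  have hfilter :
      (Finset.range (p + q)).filter (permNat γ · < z) = Finset.range k ∪ Finset.Ico p m := by
    ext c
    simp only [Finset.mem_filter, Finset.mem_range, Finset.mem_union, Finset.mem_Ico]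
    by_cases hc : c < p + q
    · rw [hchar c hc]; omega
    · omega
  have hcount : k + (m - p) = z := by
    rw [← card_filter_permNat_lt γ hz, hfilter, Finset.card_union_of_disjoint, Finset.card_range,
      Nat.card_Ico]
    refine Finset.disjoint_left.mpr fun c hc hc' => ?_
    rw [Finset.mem_range] at hc
    rw [Finset.mem_Ico] at hc'
    omega
  exact ⟨k, hkp, by omega, by omega, fun c hc => by rw [hchar c hc]; omega⟩

section Join

variable {p q z k : ℕ}

def shuffleJoin (p z k : ℕ) (f g : ℕ → ℕ) (c : ℕ) : ℕ :=
  if c < k then f c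
  else if c < p then g (c - k) + z
  else if c < p + z - k then f (c - p + k)
  else g (c - z) + z

/-- `lowPos p k` and `highPos p z k` enumerate, in increasing order, the positions at which
`shuffleJoin p z k f g` takes the values `f i < z`, resp. the values `g i + z ≥ z`. -/
def lowPos (p k i : ℕ) : ℕ := if i < k then i else i - k + p

def highPos (p z k i : ℕ) : ℕ := if i < p - k then i + k else i + z

theorem lowPos_strictMono (hk : k ≤ p) : StrictMono (lowPos p k) := by
  intro i j hij; simp only [lowPos]; split_ifs <;> omega

theorem highPos_strictMono (hk : k ≤ z) : StrictMono (highPos p z k) := by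
  intro i j hij; simp only [highPos]; split_ifs <;> omega

theorem mapsTo_lowPos_Iio (hk : k ≤ p) : MapsTo (lowPos p k) (Iio k) (Iio p) := by
  intro i hi; simp only [lowPos, mem_Iio] at *; split_ifs <;> omega

theorem mapsTo_lowPos_Ico (hzk : z ≤ k + q) :
    MapsTo (lowPos p k) (Ico k z) (Ico p (p + q)) := by
  intro i hi; simp only [lowPos, mem_Ico] at *; split_ifs <;> omega

theorem mapsTo_lowPos (hk : k ≤ p) (hzk : z ≤ k + q) :
    MapsTo (lowPos p k) (Iio z) (Iio (p + q)) := by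
  intro i hi; simp only [lowPos, mem_Iio] at *; split_ifs <;> omega

theorem mapsTo_highPos_Iio : MapsTo (highPos p z k) (Iio (p - k)) (Iio p) := by
  intro i hi; simp only [highPos, mem_Iio] at *; split_ifs <;> omega

theorem mapsTo_highPos_Ico (hk : k ≤ z) :
    MapsTo (highPos p z k) (Ico (p - k) (p + q - z)) (Ico p (p + q)) := by
  intro i hi; simp only [highPos, mem_Ico] at *; split_ifs <;> omega

theorem mapsTo_highPos : MapsTo (highPos p z k) (Iio (p + q - z)) (Iio (p + q)) := by
  intro i hi; simp only [highPos, mem_Iio] at *; split_ifs <;> omega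

variable {f g : ℕ → ℕ}

theorem shuffleJoin_lowPos (hk : k ≤ p) {i : ℕ} (hi : i < z) :
    shuffleJoin p z k f g (lowPos p k i) = f i := by
  simp only [shuffleJoin, lowPos]; split_ifs <;> first | rfl | omega | congr 1; omega

theorem shuffleJoin_highPos (hkz : k ≤ z) (i : ℕ) :
    shuffleJoin p z k f g (highPos p z k i) = g i + z := by
  simp only [shuffleJoin, highPos]; split_ifs <;> first | rfl | omega | congr 2; omega

theorem shuffleJoin_lt_iff (hk : k ≤ z) (hf : MapsTo f (Iio z) (Iio z)) (c : ℕ) :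
    shuffleJoin p z k f g c < z ↔ c < k ∨ p ≤ c ∧ c < p + z - k := by
  simp only [shuffleJoin]
  split_ifs with h₁ h₂ h₃
  · exact iff_of_true (hf (show c < z by omega)) (.inl h₁)
  · omega
  · exact iff_of_true (hf (show c - p + k < z by omega)) (by omega)
  · omega

theorem eqOn_shuffleJoin {h : ℕ → ℕ} (hkp : k ≤ p) (hkz : k ≤ z) (hzk : z ≤ k + q)
    (hf : ∀ i < z, f i = h (lowPos p k i))
    (hg : ∀ i < p + q - z, g i + z = h (highPos p z k i)) :
    EqOn (shuffleJoin p z k f g) h (Iio (p + q)) := by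
  intro c hc
  simp only [mem_Iio] at hc
  simp only [shuffleJoin]
  split_ifs with h₁ h₂ h₃
  · rw [hf c (by omega), lowPos, if_pos h₁]
  · rw [hg (c - k) (by omega), highPos, if_pos (by omega), Nat.sub_add_cancel (by omega)]
  · rw [hf _ (by omega), lowPos, if_neg (by omega)]; congr 1; omega
  · rw [hg _ (by omega), highPos, if_neg (by omega)]; congr 1; omega

theorem mapsTo_shuffleJoin (hkp : k ≤ p) (hkz : k ≤ z) (hzk : z ≤ k + q)
    (hf : MapsTo f (Iio z) (Iio z))
    (hg : MapsTo g (Iio (p + q - z)) (Iio (p + q - z))) :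
    MapsTo (shuffleJoin p z k f g) (Iio (p + q)) (Iio (p + q)) := by
  intro c hc
  simp only [mem_Iio] at hc ⊢
  simp only [shuffleJoin]
  split_ifs
  · have : f c < z := hf (show c < z by omega); omega
  · have : g (c - k) < p + q - z := hg (show c - k < p + q - z by omega); omega
  · have : f (c - p + k) < z := hf (show c - p + k < z by omega); omega
  · have : g (c - z) < p + q - z := hg (show c - z < p + q - z by omega); omega

theorem surjOn_shuffleJoin (hkp : k ≤ p) (hkz : k ≤ z) (hzk : z ≤ k + q)
    (hf : SurjOn f (Iio z) (Iio z)) (hg : SurjOn g (Iio (p + q - z)) (Iio (p + q - z))) :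
    SurjOn (shuffleJoin p z k f g) (Iio (p + q)) (Iio (p + q)) := by
  intro v hv
  simp only [mem_Iio] at hv
  rcases lt_or_ge v z with hvz | hvz
  · obtain ⟨i, hi, rfl⟩ := hf hvz
    exact ⟨lowPos p k i, mapsTo_lowPos hkp hzk hi, shuffleJoin_lowPos hkp hi⟩
  · obtain ⟨i, hi, hgi⟩ := hg (show v - z < p + q - z by omega)
    exact ⟨highPos p z k i, mapsTo_highPos hi, by rw [shuffleJoin_highPos hkz, hgi]; omega⟩

theorem strictMonoOn_shuffleJoin_Iio (hkz : k ≤ z) (hf : MapsTo f (Iio z) (Iio z))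
    (hf' : StrictMonoOn f (Iio k)) (hg' : StrictMonoOn g (Iio (p - k))) :
    StrictMonoOn (shuffleJoin p z k f g) (Iio p) := by
  intro c hc d hd hcd
  simp only [mem_Iio] at hc hd
  simp only [shuffleJoin, if_pos hc, if_pos hd]
  split_ifs with h₁ h₂
  · exact hf' h₁ h₂ hcd
  · have : f c < z := hf (show c < z by omega); omega
  · omega
  · have := hg' (show c - k < p - k by omega) (show d - k < p - k by omega) (by omega); omega

theorem strictMonoOn_shuffleJoin_Ico (hkp : k ≤ p) (hf : MapsTo f (Iio z) (Iio z))
    (hf' : StrictMonoOn f (Ico k z)) (hg' : StrictMonoOn g (Ico (p - k) (p + q - z))) :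
    StrictMonoOn (shuffleJoin p z k f g) (Ico p (p + q)) := by
  intro c ⟨hc₁, hc₂⟩ d ⟨hd₁, hd₂⟩ hcd
  simp only [shuffleJoin, if_neg (show ¬c < k by omega), if_neg (show ¬d < k by omega),
    if_neg (show ¬c < p by omega), if_neg (show ¬d < p by omega)]
  split_ifs with h₁ h₂ h₂
  · exact hf' ⟨by omega, by omega⟩ ⟨by omega, by omega⟩ (by omega)
  · have : f (c - p + k) < z := hf (show c - p + k < z by omega); omega
  · omega
  · have := hg' (show c - z ∈ Ico (p - k) (p + q - z) from ⟨by omega, by omega⟩)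
      (show d - z ∈ Ico (p - k) (p + q - z) from ⟨by omega, by omega⟩) (by omega)
    omega

end Join

section JoinPerm

variable {p q z k : ℕ} (hkp : k ≤ p) (hkz : k ≤ z) (hzk : z ≤ k + q)

noncomputable def joinPerm (α : Equiv.Perm (Fin z)) (β : Equiv.Perm (Fin (p + q - z))) :
    Equiv.Perm (Fin (p + q)) :=
  have hmaps := mapsTo_shuffleJoin hkp hkz hzk (mapsTo_permNat α) (mapsTo_permNat β)
  permOfInjOn (shuffleJoin p z k (permNat α) (permNat β)) hmaps
    (((finite_Iio _).surjOn_iff_bijOn_of_mapsTo hmaps).mp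
      (surjOn_shuffleJoin hkp hkz hzk (surjOn_permNat α) (surjOn_permNat β))).injOn

variable {α : Equiv.Perm (Fin z)} {β : Equiv.Perm (Fin (p + q - z))}

theorem permNat_joinPerm {c : ℕ} (hc : c < p + q) :
    permNat (joinPerm hkp hkz hzk α β) c = shuffleJoin p z k (permNat α) (permNat β) c := by
  unfold joinPerm; exact permNat_permOfInjOn _ _ hc

theorem isShuffle_joinPerm (hα : IsShuffle k α) (hβ : IsShuffle (p - k) β) :
    IsShuffle p (joinPerm hkp hkz hzk α β) := by
  obtain ⟨hα₁, hα₂⟩ := (isShuffle_iff_strictMonoOn hkz).mp hα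
  have hpk : p - k ≤ p + q - z := by omega
  obtain ⟨hβ₁, hβ₂⟩ := (isShuffle_iff_strictMonoOn hpk).mp hβ
  refine (isShuffle_iff_strictMonoOn (Nat.le_add_right p q)).mpr ⟨?_, ?_⟩
  · exact (strictMonoOn_shuffleJoin_Iio hkz (mapsTo_permNat α) hα₁ hβ₁).congr
      fun c hc => (permNat_joinPerm hkp hkz hzk (Nat.lt_add_right q hc)).symm
  · exact (strictMonoOn_shuffleJoin_Ico hkp (mapsTo_permNat α) hα₂ hβ₂).congr
      fun c hc => (permNat_joinPerm hkp hkz hzk hc.2).symm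

end JoinPerm

abbrev ShufflePairs (p q z : ℕ) :=
  Σ k : {k : ℕ // z - q ≤ k ∧ k ≤ min p z},
    {α : Equiv.Perm (Fin z) // IsShuffle k.1 α} ×
    {β : Equiv.Perm (Fin (p + q - z)) // IsShuffle (p - k.1) β}

noncomputable def joinShuffles (p q z : ℕ) :
    ShufflePairs p q z → {γ : Equiv.Perm (Fin (p + q)) // IsShuffle p γ} := fun x =>
  have hkp := (le_min_iff.mp x.1.2.2).1
  have hkz := (le_min_iff.mp x.1.2.2).2
  have hzk := Nat.sub_le_iff_le_add.mp x.1.2.1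
  ⟨joinPerm hkp hkz hzk x.2.1.1 x.2.2.1, isShuffle_joinPerm hkp hkz hzk x.2.1.2 x.2.2.2⟩

variable {p q z : ℕ}

theorem permNat_joinShuffles (x : ShufflePairs p q z) {c : ℕ} (hc : c < p + q) :
    permNat (joinShuffles p q z x).1 c =
      shuffleJoin p z x.1.1 (permNat x.2.1.1) (permNat x.2.2.1) c :=
  permNat_joinPerm (le_min_iff.mp x.1.2.2).1 (le_min_iff.mp x.1.2.2).2
    (Nat.sub_le_iff_le_add.mp x.1.2.1) hc

theorem joinShuffles_injective : Function.Injective (joinShuffles p q z) := by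
  rintro ⟨⟨k, hk⟩, ⟨α, _⟩, ⟨β, _⟩⟩ ⟨⟨k', hk'⟩, ⟨α', _⟩, ⟨β', _⟩⟩ h
  simp only [le_min_iff, Nat.sub_le_iff_le_add] at hk hk'
  obtain ⟨hzk, hkp, hkz⟩ := hk
  have heq : EqOn (shuffleJoin p z k (permNat α) (permNat β))
      (shuffleJoin p z k' (permNat α') (permNat β')) (Iio (p + q)) := fun c hc => by
    simpa only [permNat_joinShuffles _ hc] using congrArg (fun γ => permNat γ.1 c) h
  obtain rfl : k = k' := by
    have hiff : ∀ c < p + q, (c < k ∨ p ≤ c ∧ c < p + z - k) ↔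
        (c < k' ∨ p ≤ c ∧ c < p + z - k') := fun c hc => by
      rw [← shuffleJoin_lt_iff (g := permNat β) hkz (mapsTo_permNat α),
        ← shuffleJoin_lt_iff (g := permNat β') hk'.2.2 (mapsTo_permNat α'), heq hc]
    by_contra hne
    rcases Nat.lt_or_gt_of_ne hne with hlt | hlt
    · have := hiff k (by omega); omega
    · have := hiff k' (by omega); omega
  obtain rfl : α = α' := eq_of_eqOn_permNat fun i hi => by
    rw [← shuffleJoin_lowPos (f := permNat α) (g := permNat β) hkp hi,
      heq (mapsTo_lowPos hkp hzk hi), shuffleJoin_lowPos hkp hi]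
  obtain rfl : β = β' := eq_of_eqOn_permNat fun i hi => Nat.add_right_cancel (m := z) <| by
    rw [← shuffleJoin_highPos (f := permNat α) (g := permNat β) hkz,
      heq (mapsTo_highPos hi), shuffleJoin_highPos hkz]
  rfl

theorem joinShuffles_surjective (hz : z ≤ p + q) : Function.Surjective (joinShuffles p q z) := by
  rintro ⟨γ, hγ⟩
  obtain ⟨k, hkp, hkz, hzk, hsplit⟩ := hγ.exists_split hz
  have hlow : ∀ i < z, permNat γ (lowPos p k i) < z := fun i hi =>
    (hsplit _ (mapsTo_lowPos hkp hzk hi)).mpr (by simp only [lowPos]; split_ifs <;> omega)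
  have hhigh : ∀ i < p + q - z, z ≤ permNat γ (highPos p z k i) := fun i hi =>
    le_of_not_gt fun h => by
      have := (hsplit _ (mapsTo_highPos hi)).mp h
      simp only [highPos] at this
      split_ifs at this <;> omega
  obtain ⟨α, hα⟩ := exists_permNat_eqOn (f := permNat γ ∘ lowPos p k) hlow
    ((injOn_permNat γ).comp (lowPos_strictMono hkp).injective.injOn (mapsTo_lowPos hkp hzk))
  obtain ⟨β, hβ⟩ := exists_permNat_eqOn (f := fun i => permNat γ (highPos p z k i) - z)
    (fun i hi => by
      have : permNat γ (highPos p z k i) < p + q := mapsTo_permNat γ (mapsTo_highPos hi)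
      simp only [mem_Iio] at hi ⊢; omega)
    (fun i hi j hj h => (highPos_strictMono hkz).injective <|
      injOn_permNat γ (mapsTo_highPos hi) (mapsTo_highPos hj) <| by
        have := hhigh i hi; have := hhigh j hj; simp only at h; omega)
  replace hβ : ∀ i < p + q - z, permNat β i + z = permNat γ (highPos p z k i) := fun i hi => by
    have := hhigh i hi; rw [hβ i hi]; omega
  refine ⟨⟨⟨k, by omega, le_min hkp hkz⟩,
    ⟨α, hγ.of_comp (t := 0) (Nat.le_add_right p q) hkz (lowPos_strictMono hkp)
      (mapsTo_lowPos_Iio hkp) (mapsTo_lowPos_Ico hzk) hα⟩,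
    ⟨β, hγ.of_comp (Nat.le_add_right p q) (show p - k ≤ p + q - z by omega)
      (highPos_strictMono hkz) mapsTo_highPos_Iio (mapsTo_highPos_Ico hkz) hβ⟩⟩,
    Subtype.ext <| eq_of_eqOn_permNat fun c hc => ?_⟩
  rw [permNat_joinShuffles _ hc]
  exact eqOn_shuffleJoin hkp hkz hzk hα hβ hc

theorem shuffle_splitting_general (p q z : ℕ) (hzpq : z < p + q) :
    ∃ e : (Σ _k : {k : ℕ // z - q ≤ k ∧ k ≤ min p z},
        {α : Equiv.Perm (Fin z) // IsShuffle _k.1 α} ×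
        {β : Equiv.Perm (Fin (p + q - z)) // IsShuffle (p - _k.1) β}) ≃
        {γ : Equiv.Perm (Fin (p + q)) // IsShuffle p γ},
      ∀ (x : Σ _k : {k : ℕ // z - q ≤ k ∧ k ≤ min p z},
        {α : Equiv.Perm (Fin z) // IsShuffle _k.1 α} ×
        {β : Equiv.Perm (Fin (p + q - z)) // IsShuffle (p - _k.1) β}) (c : ℕ), c < p + q →
        permNat (e x).1 c =
          if c < x.1.1 then permNat x.2.1.1 c
          else if c < p then permNat x.2.2.1 (c - x.1.1) + z
          else if c < p + z - x.1.1 then permNat x.2.1.1 (c - p + x.1.1)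
          else permNat x.2.2.1 (c - z) + z :=
  ⟨.ofBijective _ ⟨joinShuffles_injective, joinShuffles_surjective hzpq.le⟩,
    fun x _ hc => permNat_joinShuffles x hc⟩

/-- **Shuffle splitting.** For `0 < z < p + q`, there is a bijection from the disjoint union
over `k` with `max (0, z - q) ≤ k ≤ min p z` of `Sh(k, z-k) × Sh(p-k, q+k-z)` onto `Sh(p,q)`,
given by the explicit interleaving formula. -/
theorem shuffle_splitting (p q z : ℕ) (hz : 0 < z) (hzpq : z < p + q) :
    ∃ e : (Σ _k : {k : ℕ // z - q ≤ k ∧ k ≤ min p z},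
        {α : Equiv.Perm (Fin z) // IsShuffle _k.1 α} ×
        {β : Equiv.Perm (Fin (p + q - z)) // IsShuffle (p - _k.1) β}) ≃
        {γ : Equiv.Perm (Fin (p + q)) // IsShuffle p γ},
      ∀ (x : Σ _k : {k : ℕ // z - q ≤ k ∧ k ≤ min p z},
        {α : Equiv.Perm (Fin z) // IsShuffle _k.1 α} ×
        {β : Equiv.Perm (Fin (p + q - z)) // IsShuffle (p - _k.1) β}) (c : ℕ), c < p + q →
        permNat (e x).1 c =
          if c < x.1.1 then permNat x.2.1.1 c
          else if c < p then permNat x.2.2.1 (c - x.1.1) + z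
          else if c < p + z - x.1.1 then permNat x.2.1.1 (c - p + x.1.1)
          else permNat x.2.2.1 (c - z) + z :=
  shuffle_splitting_general p q z hzpq
end

section
/- In the simplicial category Δ, for nonnegative integers k, p, r with r ≤ p and a (k,p)-shuffle μ with r ≤ μ(0), letting α be the corresponding (k, p-r)-shuffle (α(t) = μ(t)-r for t < k, α(t) = μ(t+r)-r for k ≤ t < k+p-r), the following identity of order-preserving maps [p+k-r] → [p] holds: s^{μ(0)} ∘ ... ∘ s^{μ(k-1)} ∘ d^{r-1} ∘ ... ∘ d^0 = d^{r-1} ∘ ... ∘ d^0 ∘ s^{α(0)} ∘ ... ∘ s^{α(k-1)}, where d^i : [n-1] → [n] are coface maps and s^i : [n+1] → [n] are codegeneracy maps. -/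
/-- The coface map `d^i : [n-1] → [n]` of the simplex category, as the order-preserving
injection of natural numbers skipping `i`. -/
def coface (i : ℕ) : ℕ → ℕ := fun x => if x < i then x else x + 1

/-- The codegeneracy map `s^i : [n+1] → [n]` of the simplex category, as the order-preserving
surjection of natural numbers repeating `i`. -/
def codegen (i : ℕ) : ℕ → ℕ := fun x => if x ≤ i then x else x - 1

/-- The composite `d^{l₀} ∘ d^{l₁} ∘ ⋯` of cofaces indexed by a list. -/
def cofaceList (l : List ℕ) : ℕ → ℕ := l.foldr (fun i g => coface i ∘ g) id

/-- The composite `s^{l₀} ∘ s^{l₁} ∘ ⋯` of codegeneracies indexed by a list. -/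
def codegenList (l : List ℕ) : ℕ → ℕ := l.foldr (fun i g => codegen i ∘ g) id

/-!
All the cofaces `d^{r-1} ∘ ⋯ ∘ d^0` together are the translation `x ↦ x + r`, and a
codegeneracy commutes with translation up to shifting its index: `s^{i+r}(x + r) = s^i(x) + r`.
Since `μ` increases on its first block, `r ≤ μ(0) ≤ μ(t)` for `t < k`, so every index `μ(t)` is
`α(t) + r` and the translation can be pushed through all the codegeneracies.
-/

lemma cofaceList_range_reverse_apply (r x : ℕ) :
    cofaceList (List.range r).reverse x = x + r := by
  induction r with
  | zero => rfl
  | succ r ih =>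
    rw [List.range_succ, List.reverse_append]
    change coface r (cofaceList (List.range r).reverse x) = x + (r + 1)
    rw [ih, coface, if_neg (by omega)]
    omega

lemma codegen_add_add (i r x : ℕ) : codegen (i + r) (x + r) = codegen i x + r := by
  simp only [codegen]
  split_ifs <;> omega

lemma codegenList_map_add_apply (r : ℕ) (L : List ℕ) (x : ℕ) :
    codegenList (L.map (· + r)) (x + r) = codegenList L x + r := by
  induction L with
  | nil => rfl
  | cons i L ih =>
    change codegen (i + r) (codegenList (L.map (· + r)) (x + r)) = codegen i (codegenList L x) + r
    rw [ih, codegen_add_add]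

lemma IsShuffle.permNat_le_permNat {a n : ℕ} {γ : Equiv.Perm (Fin n)} (hγ : IsShuffle a γ)
    {s t : ℕ} (hst : s ≤ t) (hta : t < a) (htn : t < n) :
    permNat γ s ≤ permNat γ t := by
  rcases hst.eq_or_lt with rfl | hlt
  · rfl
  · simp only [permNat, dif_pos htn, dif_pos (hlt.trans htn)]
    exact (hγ.1 ⟨s, hlt.trans htn⟩ ⟨t, htn⟩ hlt hta).le

theorem codegen_coface_interchange_general (k p r : ℕ) (hrp : r ≤ p)
    (μ : Equiv.Perm (Fin (k + p))) (hμ : IsShuffle k μ)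
    (hr0 : k = 0 ∨ r ≤ permNat μ 0)
    (α : Equiv.Perm (Fin (k + p - r)))
    (hform : ∀ t < k + p - r,
      permNat α t = if t < k then permNat μ t - r else permNat μ (t + r) - r) :
    ∀ x ≤ p + k - r,
      (codegenList ((List.range k).map (permNat μ)) ∘ cofaceList (List.range r).reverse) x =
      (cofaceList (List.range r).reverse ∘ codegenList ((List.range k).map (permNat α))) x := by
  intro x _
  have hμ_ge : ∀ t < k, r ≤ permNat μ t := fun t ht =>
    (hr0.resolve_left (by omega)).trans (hμ.permNat_le_permNat t.zero_le ht (by omega))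
  have hindices :
      (List.range k).map (permNat μ) = ((List.range k).map (permNat α)).map (· + r) := by
    rw [List.map_map]
    refine List.map_congr_left fun t ht => ?_
    have htk : t < k := List.mem_range.mp ht
    have := hform t (by omega)
    rw [if_pos htk] at this
    simp only [Function.comp_apply, this]
    have := hμ_ge t htk
    omega
  simp only [Function.comp_apply, cofaceList_range_reverse_apply, hindices,
    codegenList_map_add_apply]

/-- For a `(k,p)`-shuffle `μ` with `r ≤ μ(0)` and corresponding `(k, p-r)`-shuffle `α`,
the identity `s^{μ(0)} ⋯ s^{μ(k-1)} d^{r-1} ⋯ d^0 = d^{r-1} ⋯ d^0 s^{α(0)} ⋯ s^{α(k-1)}`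
holds as order-preserving maps `[p+k-r] → [p]`. -/
theorem codegen_coface_interchange (k p r : ℕ) (hrp : r ≤ p)
    (μ : Equiv.Perm (Fin (k + p))) (hμ : IsShuffle k μ)
    (hr0 : k = 0 ∨ r ≤ permNat μ 0)
    (α : Equiv.Perm (Fin (k + p - r))) (hα : IsShuffle k α)
    (hform : ∀ t < k + p - r,
      permNat α t = if t < k then permNat μ t - r else permNat μ (t + r) - r) :
    ∀ x ≤ p + k - r,
      (codegenList ((List.range k).map (permNat μ)) ∘ cofaceList (List.range r).reverse) x =
      (cofaceList (List.range r).reverse ∘ codegenList ((List.range k).map (permNat α))) x :=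
  codegen_coface_interchange_general k p r hrp μ hμ hr0 α hform
end

section
/- Let μ be a (k,p)-shuffle and r ≤ p. The composite map [r] → [p] given by s^{μ(0)} ∘ ... ∘ s^{μ(k-1)} ∘ d^{p+k} ∘ ... ∘ d^{r+1} (where the d's are cofaces [r] → [p+k] and the s's are codegeneracies composing to [p]) is injective if and only if r ≤ μ(0) (with the convention that the condition holds vacuously when k = 0). -/
/-!
On `{x ≤ r}` the cofaces `d^{p+k}, …, d^{r+1}` act as the identity, so only the codegeneracies
matter. The first block of a shuffle is increasing, so `μ(0)` is the smallest of the indices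
`μ(0), …, μ(k-1)`. If `r ≤ μ(0)`, every codegeneracy fixes `{x ≤ r}` pointwise. Otherwise
`m = μ(0) < r`, the later codegeneracies fix both `m` and `m + 1`, and `s^m` identifies them.
-/

open Set

@[simp]
lemma cofaceList_cons (i : ℕ) (l : List ℕ) : cofaceList (i :: l) = coface i ∘ cofaceList l := rfl

@[simp]
lemma codegenList_cons (i : ℕ) (l : List ℕ) :
    codegenList (i :: l) = codegen i ∘ codegenList l := rfl

lemma cofaceList_apply_of_forall_lt {l : List ℕ} {x : ℕ} (h : ∀ i ∈ l, x < i) :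
    cofaceList l x = x := by
  induction l with
  | nil => rfl
  | cons a l ih =>
    simp only [List.forall_mem_cons] at h
    simp [ih h.2, coface, h.1]

lemma codegenList_apply_of_forall_le {l : List ℕ} {x : ℕ} (h : ∀ i ∈ l, x ≤ i) :
    codegenList l x = x := by
  induction l with
  | nil => rfl
  | cons a l ih =>
    simp only [List.forall_mem_cons] at h
    simp [ih h.2, codegen, h.1]

lemma cofaceList_map_range_apply {n r x : ℕ} (hx : x ≤ r) :
    cofaceList ((List.range (n - r)).map (fun t => n - t)) x = x := by
  refine cofaceList_apply_of_forall_lt fun i hi => ?_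
  obtain ⟨t, ht, rfl⟩ := List.mem_map.1 hi
  have := List.mem_range.1 ht
  omega

lemma codegenList_cons_injOn_iff {m : ℕ} {l : List ℕ} (hl : ∀ i ∈ l, m < i) (r : ℕ) :
    InjOn (codegenList (m :: l)) {x | x ≤ r} ↔ r ≤ m := by
  constructor
  · intro hinj
    by_contra! hmr
    have hm : codegenList (m :: l) m = m := by
      simp [codegenList_apply_of_forall_le fun i hi => (hl i hi).le, codegen]
    have hm1 : codegenList (m :: l) (m + 1) = m := by
      simp [codegenList_apply_of_forall_le hl, codegen]
    have := hinj (show m ≤ r by omega) (show m + 1 ≤ r from hmr) (hm.trans hm1.symm)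
    omega
  · intro hrm x hx y hy hxy
    have hfix : ∀ z ≤ r, codegenList (m :: l) z = z := fun z hz =>
      codegenList_apply_of_forall_le fun i hi => by
        rcases List.mem_cons.1 hi with rfl | hi
        · omega
        · have := hl i hi; omega
    rwa [hfix x hx, hfix y hy] at hxy

lemma IsShuffle.permNat_lt_permNat {a n : ℕ} {γ : Equiv.Perm (Fin n)} (hγ : IsShuffle a γ)
    {c d : ℕ} (hcd : c < d) (hda : d < a) (hdn : d < n) : permNat γ c < permNat γ d := by
  simpa [permNat, hdn, hcd.trans hdn] using
    hγ.1 ⟨c, hcd.trans hdn⟩ ⟨d, hdn⟩ hcd hda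

lemma IsShuffle.permNat_zero_lt_of_mem {j n : ℕ} {γ : Equiv.Perm (Fin (j + 1 + n))}
    (hγ : IsShuffle (j + 1) γ) :
    ∀ i ∈ (List.range j).map (fun t => permNat γ (t + 1)), permNat γ 0 < i := by
  intro i hi
  obtain ⟨t, ht, rfl⟩ := List.mem_map.1 hi
  have := List.mem_range.1 ht
  exact hγ.permNat_lt_permNat (Nat.succ_pos t) (by omega) (by omega)

theorem codegen_coface_injective_iff_general (k p r : ℕ)
    (μ : Equiv.Perm (Fin (k + p))) (hμ : IsShuffle k μ) :
    Set.InjOn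
      (codegenList ((List.range k).map (permNat μ)) ∘
        cofaceList ((List.range (p + k - r)).map (fun t => p + k - t)))
      {x : ℕ | x ≤ r} ↔ (k = 0 ∨ r ≤ permNat μ 0) := by
  have hcoface : EqOn
      (codegenList ((List.range k).map (permNat μ)) ∘
        cofaceList ((List.range (p + k - r)).map (fun t => p + k - t)))
      (codegenList ((List.range k).map (permNat μ))) {x | x ≤ r} := fun x hx =>
    congrArg _ (cofaceList_map_range_apply hx)
  rw [hcoface.injOn_iff]
  cases k with
  | zero => simp [codegenList]
  | succ j =>
    rw [List.range_succ_eq_map, List.map_cons, List.map_map, or_iff_right (Nat.succ_ne_zero j)]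
    exact codegenList_cons_injOn_iff hμ.permNat_zero_lt_of_mem r

/-- The composite `s^{μ(0)} ∘ ⋯ ∘ s^{μ(k-1)} ∘ d^{p+k} ∘ ⋯ ∘ d^{r+1} : [r] → [p]` is
injective if and only if `r ≤ μ(0)` (vacuously true when `k = 0`). -/
theorem codegen_coface_injective_iff (k p r : ℕ) (hrp : r ≤ p)
    (μ : Equiv.Perm (Fin (k + p))) (hμ : IsShuffle k μ) :
    Set.InjOn
      (codegenList ((List.range k).map (permNat μ)) ∘
        cofaceList ((List.range (p + k - r)).map (fun t => p + k - t)))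
      {x : ℕ | x ≤ r} ↔ (k = 0 ∨ r ≤ permNat μ 0) :=
  codegen_coface_injective_iff_general k p r μ hμ
end

section
/- Let C be a chain complex over K = Z/2 with differential ∂. For each integer m, define the (non-additive) function q^m : C → W ⊗_{K[π]} (C ⊗ C) by q^m(c) = e_{m-|c|} ⊗ c ⊗ c + e_{m-|c|+1} ⊗ c ⊗ ∂c for homogeneous c of degree |c| (with e_j interpreted as 0 for j < 0, and π acting on C ⊗ C by swapping factors). Then q^m commutes with the differentials: ∂(q^m(c)) = q^m(∂c) for all homogeneous c. Consequently q^m sends cycles to cycles and induces a well-defined function on homology. -/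
/-! In characteristic 2 the two swapped terms `e_{i-1} ⊗ x ⊗ y + e_{i-1} ⊗ y ⊗ x` of the
differential cancel on the diagonal `x = y`, so `D (e_i ⊗ c ⊗ c) = e_i ⊗ ∂c ⊗ c + e_i ⊗ c ⊗ ∂c`.
With `i = m - a`, the correction term `e_{i+1} ⊗ c ⊗ ∂c` of `q^m(c)` cancels exactly these two
terms, leaving `e_{i+1} ⊗ ∂c ⊗ ∂c = q^m(∂c)`, whose term `e_{i+2} ⊗ ∂c ⊗ ∂∂c` vanishes. -/

theorem add_self_eq_zero_of_module_zmod_two {T : Type*} [AddCommGroup T] [Module (ZMod 2) T]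
    (t : T) : t + t = 0 := by
  rw [← two_smul (ZMod 2) t, show (2 : ZMod 2) = 0 from rfl, zero_smul]

section ExternalSquare

variable {M T : Type*} [AddCommGroup M] [Module (ZMod 2) M] [AddCommGroup T] [Module (ZMod 2) T]
  (bd : M →ₗ[ZMod 2] M) (D : T →ₗ[ZMod 2] T) (el : ℤ → M →ₗ[ZMod 2] M →ₗ[ZMod 2] T)

def qOp (m a : ℤ) (c : M) : T :=
  el (m - a) c c + el (m - a + 1) c (bd c)

theorem qOp_zero (m a : ℤ) : qOp bd el m a 0 = 0 := by
  simp [qOp]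

variable {bd D el}

theorem D_el_diag
    (hDel : ∀ (i : ℤ) (x y : M),
      D (el i x y) = el (i - 1) x y + el (i - 1) y x + el i (bd x) y + el i x (bd y))
    (i : ℤ) (x : M) : D (el i x x) = el i (bd x) x + el i x (bd x) := by
  rw [hDel, add_self_eq_zero_of_module_zmod_two, zero_add]

theorem D_qOp (hbdbd : ∀ x, bd (bd x) = 0)
    (hDel : ∀ (i : ℤ) (x y : M),
      D (el i x y) = el (i - 1) x y + el (i - 1) y x + el i (bd x) y + el i x (bd y))
    (m a : ℤ) (c : M) : D (qOp bd el m a c) = qOp bd el m (a - 1) (bd c) := by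
  have hshift : m - (a - 1) = m - a + 1 := by ring
  have hcancel : el (m - a) (bd c) c + el (m - a) c (bd c)
      + (el (m - a) c (bd c) + el (m - a) (bd c) c) = 0 := by
    rw [add_comm (el (m - a) c (bd c)), add_self_eq_zero_of_module_zmod_two]
  simp only [qOp, map_add, D_el_diag hDel, hDel (m - a + 1), hbdbd, map_zero, add_sub_cancel_right,
    hshift]
  rw [add_zero, add_zero, ← add_assoc, hcancel, zero_add]

end ExternalSquare

theorem qm_chain_map_general {M T : Type*}
    [AddCommGroup M] [Module (ZMod 2) M] [AddCommGroup T] [Module (ZMod 2) T]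
    (bd : M →ₗ[ZMod 2] M) (D : T →ₗ[ZMod 2] T)
    (hbdbd : ∀ x, bd (bd x) = 0)
    (el : ℤ → M →ₗ[ZMod 2] M →ₗ[ZMod 2] T)
    (hDel : ∀ (i : ℤ) (x y : M),
      D (el i x y) = el (i - 1) x y + el (i - 1) y x + el i (bd x) y + el i x (bd y))
    (m a : ℤ) (c : M) :
    D (el (m - a) c c + el (m - a + 1) c (bd c)) =
      el (m - (a - 1)) (bd c) (bd c) + el (m - (a - 1) + 1) (bd c) (bd (bd c)) ∧
    (bd c = 0 → D (el (m - a) c c + el (m - a + 1) c (bd c)) = 0) := by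
  have hchain : D (qOp bd el m a c) = qOp bd el m (a - 1) (bd c) := D_qOp hbdbd hDel m a c
  refine ⟨hchain, fun hcycle => ?_⟩
  rw [← qOp, hchain, hcycle, qOp_zero]

/-- **The external operation `q^m` is a chain map.**
Here `C` is a (ℤ-graded) chain complex over `K = ℤ/2`, presented as a module `M` with
differential `bd` (`bd² = 0`) and grading `Cdeg`, and `T` is the complex
`W ⊗_{K[π]} (C ⊗ C)` presented as a module with differential `D` together with the
structure maps `el i x y = e_i ⊗ x ⊗ y` (bilinear, vanishing for `i < 0`), whose
differential satisfies the standard formula (in characteristic 2)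
`D(e_i ⊗ x ⊗ y) = e_{i-1} ⊗ x ⊗ y + e_{i-1} ⊗ y ⊗ x + e_i ⊗ bdx ⊗ y + e_i ⊗ x ⊗ bdy`.
Then for homogeneous `c` of degree `a`, the element
`q^m(c) = e_{m-a} ⊗ c ⊗ c + e_{m-a+1} ⊗ c ⊗ bdc` satisfies `D(q^m c) = q^m(bd c)`;
consequently `q^m` sends cycles to cycles. -/
theorem qm_chain_map {M T : Type*}
    [AddCommGroup M] [Module (ZMod 2) M] [AddCommGroup T] [Module (ZMod 2) T]
    (bd : M →ₗ[ZMod 2] M) (D : T →ₗ[ZMod 2] T)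
    (hbdbd : ∀ x, bd (bd x) = 0)
    (el : ℤ → M →ₗ[ZMod 2] M →ₗ[ZMod 2] T)
    (helneg : ∀ i : ℤ, i < 0 → el i = 0)
    (hDel : ∀ (i : ℤ) (x y : M),
      D (el i x y) = el (i - 1) x y + el (i - 1) y x + el i (bd x) y + el i x (bd y))
    (Cdeg : ℤ → Submodule (ZMod 2) M)
    (hbddeg : ∀ (a : ℤ) (x : M), x ∈ Cdeg a → bd x ∈ Cdeg (a - 1))
    (m a : ℤ) (c : M) (hc : c ∈ Cdeg a) :
    D (el (m - a) c c + el (m - a + 1) c (bd c)) =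
      el (m - (a - 1)) (bd c) (bd c) + el (m - (a - 1) + 1) (bd c) (bd (bd c)) ∧
    (bd c = 0 → D (el (m - a) c c + el (m - a + 1) c (bd c)) = 0) :=
  qm_chain_map_general bd D hbdbd el hDel m a c
end

section
/- Let C be a chain complex over K = Z/2 and q^m as defined by q^m(c) = e_{m-|c|} ⊗ c ⊗ c + e_{m-|c|+1} ⊗ c ⊗ ∂c in W ⊗_π (C⊗C). Then q^m induces an additive map on homology: for homology classes [x], [y] of the same degree, q^m([x] + [y]) = q^m([x]) + q^m([y]) in H(W ⊗_π (C⊗C)). -/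
/-!
Write `el i x y` for `e_i ⊗ x ⊗ y`. For cycles `x, y` of degree `a`, bilinearity gives
`q^m(x + y) = q^m(x) + q^m(y) + e_{m-a} ⊗ (x ⊗ y + y ⊗ x)`, and the cross term is the boundary
of `e_{m-a+1} ⊗ x ⊗ y`, because `d e_{i+1} = (1 + σ) e_i` and `∂x = ∂y = 0`.
-/

section

variable {R M T : Type*} [CommSemiring R] [AddCommMonoid M] [Module R M]
  [AddCommMonoid T] [Module R T]

theorem bilin_add_add_self (el : M →ₗ[R] M →ₗ[R] T) (x y : M) :
    el (x + y) (x + y) = el x x + el y y + (el x y + el y x) := by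
  simp only [map_add, LinearMap.add_apply]
  abel

theorem boundary_el_succ_of_cycles (bd : M →ₗ[R] M) (D : T →ₗ[R] T)
    (el : ℤ → M →ₗ[R] M →ₗ[R] T)
    (hDel : ∀ (i : ℤ) (x y : M),
      D (el i x y) = el (i - 1) x y + el (i - 1) y x + el i (bd x) y + el i x (bd y))
    (i : ℤ) {x y : M} (hxc : bd x = 0) (hyc : bd y = 0) :
    D (el (i + 1) x y) = el i x y + el i y x := by
  simp only [hDel, hxc, hyc, add_sub_cancel_right, map_zero, LinearMap.zero_apply, add_zero]

end

theorem qm_additive_on_homology_general {M T : Type*}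
    [AddCommGroup M] [Module (ZMod 2) M] [AddCommGroup T] [Module (ZMod 2) T]
    (bd : M →ₗ[ZMod 2] M) (D : T →ₗ[ZMod 2] T)
    (el : ℤ → M →ₗ[ZMod 2] M →ₗ[ZMod 2] T)
    (hDel : ∀ (i : ℤ) (x y : M),
      D (el i x y) = el (i - 1) x y + el (i - 1) y x + el i (bd x) y + el i x (bd y))
    (m a : ℤ) (x y : M)
    (hxc : bd x = 0) (hyc : bd y = 0) :
    ∃ b : T,
      el (m - a) (x + y) (x + y) + el (m - a + 1) (x + y) (bd (x + y)) =
        el (m - a) x x + el (m - a + 1) x (bd x) +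
        (el (m - a) y y + el (m - a + 1) y (bd y)) + D b := by
  refine ⟨el (m - a + 1) x y, ?_⟩
  rw [boundary_el_succ_of_cycles bd D el hDel _ hxc hyc, bilin_add_add_self]
  simp only [map_add bd, hxc, hyc, add_zero, map_zero]

/-- **The external operation `q^m` is additive on homology.**
With `C` a chain complex over `K = ℤ/2` presented as `(M, bd, Cdeg)` and
`T = W ⊗_{K[π]} (C ⊗ C)` presented as `(T, D, el)` as in the definition of `q^m`
(`el i x y = e_i ⊗ x ⊗ y`), for cycles `x, y` of the same degree `a` the classes satisfy
`q^m([x] + [y]) = q^m([x]) + q^m([y])` in `H(W ⊗_π (C ⊗ C))`: the difference of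
chain-level values `q^m(x+y) - q^m(x) - q^m(y)` is a boundary. -/
theorem qm_additive_on_homology {M T : Type*}
    [AddCommGroup M] [Module (ZMod 2) M] [AddCommGroup T] [Module (ZMod 2) T]
    (bd : M →ₗ[ZMod 2] M) (D : T →ₗ[ZMod 2] T)
    (hbdbd : ∀ x, bd (bd x) = 0)
    (el : ℤ → M →ₗ[ZMod 2] M →ₗ[ZMod 2] T)
    (helneg : ∀ i : ℤ, i < 0 → el i = 0)
    (hDel : ∀ (i : ℤ) (x y : M),
      D (el i x y) = el (i - 1) x y + el (i - 1) y x + el i (bd x) y + el i x (bd y))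
    (Cdeg : ℤ → Submodule (ZMod 2) M)
    (hbddeg : ∀ (a : ℤ) (x : M), x ∈ Cdeg a → bd x ∈ Cdeg (a - 1))
    (m a : ℤ) (x y : M) (hx : x ∈ Cdeg a) (hy : y ∈ Cdeg a)
    (hxc : bd x = 0) (hyc : bd y = 0) :
    ∃ b : T,
      el (m - a) (x + y) (x + y) + el (m - a + 1) (x + y) (bd (x + y)) =
        el (m - a) x x + el (m - a + 1) x (bd x) +
        (el (m - a) y y + el (m - a + 1) y (bd y)) + D b :=
  qm_additive_on_homology_general bd D el hDel m a x y hxc hyc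
end
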